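/- If K ⊆ L ⊆ M are finite extensions of local fields with both M and L Galois over K, then VC(M/K) implies VC(L/K). -/

import Mathlib

/-- A local field structure on a field `K`: a normalized (surjective) discrete
valuation `v : K* ↠ ℤ`, extended by a junk value at `0`, with respect to which
`K` is complete. -/
structure LocalFieldStruct (K : Type) [Field K] where
  /-- the valuation; its value at `0` is irrelevant -/
  v : K → ℤ
  v_mul : ∀ x y : K, x ≠ 0 → y ≠ 0 → v (x * y) = v x + v y
  v_add : ∀ x y : K, x ≠ 0 → y ≠ 0 → x + y ≠ 0 → min (v x) (v y) ≤ v (x + y)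
  v_surj : ∀ n : ℤ, ∃ x : K, x ≠ 0 ∧ v x = n
  complete : ∀ a : ℕ → K,
      (∀ N : ℤ, ∃ M : ℕ, ∀ m : ℕ, M ≤ m → ∀ n : ℕ, M ≤ n →
        a m = a n ∨ N ≤ v (a m - a n)) →
      ∃ x : K, ∀ N : ℤ, ∃ M : ℕ, ∀ n : ℕ, M ≤ n → a n = x ∨ N ≤ v (a n - x)

namespace LocalFieldStruct

variable {K L : Type} [Field K] [Field L]

/-- `x` lies in the valuation ring `O_K`. -/
def Integral (w : LocalFieldStruct K) (x : K) : Prop :=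
  x = 0 ∨ 0 ≤ w.v x

/-- The residue characteristic of `K` is the prime `p`, i.e. `p` maps to `0`
in the residue field of the valuation ring. -/
def ResidueCharP (w : LocalFieldStruct K) (p : ℕ) : Prop :=
  p.Prime ∧ ((p : K) = 0 ∨ 0 < w.v (p : K))

/-- `K` has mixed characteristic `(0, p)`: `K` has characteristic `0` and its
residue field has characteristic `p > 0`. -/
def MixedChar (w : LocalFieldStruct K) (p : ℕ) : Prop :=
  CharZero K ∧ p.Prime ∧ 0 < w.v (p : K)

/-- `e` is the ramification index `e_{L/K}`: the valuation of `L` restricted to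
`K` is `e` times the valuation of `K`. -/
def IsRamificationIndex (wK : LocalFieldStruct K) (wL : LocalFieldStruct L)
    [Algebra K L] (e : ℕ) : Prop :=
  0 < e ∧ ∀ x : K, x ≠ 0 → wL.v (algebraMap K L x) = (e : ℤ) * wK.v x

/-- `d` is the valuation `d_{L/K}` of the different of `L/K`, characterized by
`Tr_{L/K}(𝔭_L^i) ⊆ O_K ↔ i ≥ -d` for all `i : ℤ`. -/
def IsDifferentVal (wK : LocalFieldStruct K) (wL : LocalFieldStruct L)
    [Algebra K L] (d : ℤ) : Prop :=
  ∀ i : ℤ,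
    (∀ x : L, (x ≠ 0 → i ≤ wL.v x) → wK.Integral (Algebra.trace K L x)) ↔ -d ≤ i

end LocalFieldStruct

/-- `x` is a normal basis generator of `L` over `K`: the Galois conjugates of
`x` form a `K`-basis of `L`. -/
def IsNormalElement (K : Type) [Field K] {L : Type} [Field L] [Algebra K L]
    (x : L) : Prop :=
  LinearIndependent K (fun σ : L ≃ₐ[K] L => σ x) ∧
    Submodule.span K (Set.range fun σ : L ≃ₐ[K] L => σ x) = ⊤

/-- The valuation criterion `VC(L/K)`, for an extension with ramification
index `e` and different of valuation `d`: every nonzero `x ∈ L` with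
`v_L(x) ≡ -d-1 (mod e)` is a normal basis generator of `L` over `K`. -/
def VC (K : Type) [Field K] {L : Type} [Field L] [Algebra K L]
    (wL : LocalFieldStruct L) (e : ℕ) (d : ℤ) : Prop :=
  ∀ x : L, x ≠ 0 → Int.ModEq (e : ℤ) (wL.v x) (-d - 1) → IsNormalElement K x

/-!
Since `K` is complete, every finite-dimensional `K`-subspace of `L` is complete for `v_L`. Hence,
up to a bounded error, `v_L` is `e_{L/K}` times the least valuation of the coordinates in a
`K`-basis, while `v_M` on `L` is at least `e_{M/K}` times it. Comparing high powers of an element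
removes the error: `v_M` restricts to `e_{M/L} v_L` on `L`, with `e_{M/K} = e_{M/L} e_{L/K}`.

By the characterization of the different there is `w₀ ∈ M` with `v_M(w₀) = -d_{M/K} - 1` whose
trace to `K` is not integral; then `t₀ = Tr_{M/L}(w₀)` has `v_L(t₀) = -d_{L/K} - 1`. Given
`x ∈ L` with `v_L(x) ≡ -d_{L/K} - 1 (mod e_{L/K})`, the element `y = (x / t₀) • w₀` satisfies
`v_M(y) ≡ -d_{M/K} - 1 (mod e_{M/K})` and `Tr_{M/L}(y) = x`. So `y` is normal over `K` by
`VC(M/K)`, and the trace of a normal element of `M` is normal in `L`, as the trace is surjective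
and commutes with the Galois action.
-/

lemma Int.nonpos_of_forall_nat_mul_le {a C : ℤ} (h : ∀ n : ℕ, n * a ≤ C) : a ≤ 0 := by
  by_contra! ha
  have := h (C.toNat + 1)
  push_cast at this
  nlinarith [Int.self_le_toNat C]

namespace LocalFieldStruct

section Valuation

variable {F : Type} [Field F] (w : LocalFieldStruct F) {x y : F}

lemma v_one : w.v 1 = 0 := by
  have := w.v_mul 1 1 one_ne_zero one_ne_zero
  rw [mul_one] at this
  omega

lemma v_inv (hx : x ≠ 0) : w.v x⁻¹ = -w.v x := by
  have := w.v_mul x x⁻¹ hx (inv_ne_zero hx)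
  rw [mul_inv_cancel₀ hx, w.v_one] at this
  omega

lemma v_div (hx : x ≠ 0) (hy : y ≠ 0) : w.v (x / y) = w.v x - w.v y := by
  rw [div_eq_mul_inv, w.v_mul _ _ hx (inv_ne_zero hy), w.v_inv hy, sub_eq_add_neg]

lemma v_neg (hx : x ≠ 0) : w.v (-x) = w.v x := by
  have h1 : w.v (-1) + w.v (-1) = 0 := by
    rw [← w.v_mul _ _ (neg_ne_zero.2 one_ne_zero) (neg_ne_zero.2 one_ne_zero), neg_mul_neg,
      mul_one, w.v_one]
  rw [neg_eq_neg_one_mul, w.v_mul _ _ (neg_ne_zero.2 one_ne_zero) hx]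
  omega

lemma v_pow (hx : x ≠ 0) (n : ℕ) : w.v (x ^ n) = n * w.v x := by
  induction n with
  | zero => simpa using w.v_one
  | succ k ih =>
    rw [pow_succ, w.v_mul _ _ (pow_ne_zero _ hx) hx, ih]
    push_cast
    ring

/-- `v(x) ≥ N`, with the convention `v(0) = ∞`. -/
def ValGe (x : F) (N : ℤ) : Prop :=
  x = 0 ∨ N ≤ w.v x

variable {w} {N N' : ℤ}

lemma valGe_self (x : F) : w.ValGe x (w.v x) :=
  Or.inr le_rfl

lemma valGe_iff_of_ne_zero (hx : x ≠ 0) : w.ValGe x N ↔ N ≤ w.v x :=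
  or_iff_right hx

lemma ValGe.mono (h : w.ValGe x N) (hN : N' ≤ N) : w.ValGe x N' :=
  h.imp_right hN.trans

lemma ValGe.add (hx : w.ValGe x N) (hy : w.ValGe y N) : w.ValGe (x + y) N := by
  by_cases hx0 : x = 0
  · rwa [hx0, zero_add]
  by_cases hy0 : y = 0
  · rwa [hy0, add_zero]
  by_cases hxy : x + y = 0
  · exact Or.inl hxy
  rw [valGe_iff_of_ne_zero hx0] at hx
  rw [valGe_iff_of_ne_zero hy0] at hy
  exact Or.inr ((le_min hx hy).trans (w.v_add x y hx0 hy0 hxy))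

lemma valGe_neg : w.ValGe (-x) N ↔ w.ValGe x N := by
  by_cases hx : x = 0
  · simp [hx, ValGe]
  rw [valGe_iff_of_ne_zero hx, valGe_iff_of_ne_zero (neg_ne_zero.2 hx), w.v_neg hx]

lemma ValGe.sub (hx : w.ValGe x N) (hy : w.ValGe y N) : w.ValGe (x - y) N :=
  sub_eq_add_neg x y ▸ hx.add (valGe_neg.2 hy)

lemma valGe_sum {ι : Type*} (s : Finset ι) {f : ι → F} (hf : ∀ i ∈ s, w.ValGe (f i) N) :
    w.ValGe (∑ i ∈ s, f i) N := by
  classical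
  induction s using Finset.induction_on with
  | empty => exact Or.inl rfl
  | insert i s hi ih =>
    rw [Finset.sum_insert hi]
    exact (hf i (Finset.mem_insert_self i s)).add
      (ih fun j hj => hf j (Finset.mem_insert_of_mem hj))

lemma eq_zero_of_forall_valGe (h : ∀ N, w.ValGe x N) : x = 0 :=
  (h (w.v x + 1)).resolve_right (by omega)

end Valuation

section Completeness

variable {F : Type} [Field F] (w : LocalFieldStruct F)

def Cau (a : ℕ → F) : Prop :=
  ∀ N : ℤ, ∃ M : ℕ, ∀ m ≥ M, ∀ n ≥ M, w.ValGe (a m - a n) N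

def Lim (a : ℕ → F) (x : F) : Prop :=
  ∀ N : ℤ, ∃ M : ℕ, ∀ n ≥ M, w.ValGe (a n - x) N

def IsComplete (S : Set F) : Prop :=
  ∀ a : ℕ → F, (∀ n, a n ∈ S) → w.Cau a → ∃ x ∈ S, w.Lim a x

variable {w} {a b : ℕ → F} {x y : F}

lemma Cau.exists_lim (ha : w.Cau a) : ∃ x, w.Lim a x := by
  simp only [Cau, Lim, ValGe, sub_eq_zero] at ha ⊢
  exact w.complete a ha

lemma Lim.cau (ha : w.Lim a x) : w.Cau a := by
  intro N
  obtain ⟨M, hM⟩ := ha N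
  exact ⟨M, fun m hm n hn => sub_sub_sub_cancel_right (a m) (a n) x ▸ (hM m hm).sub (hM n hn)⟩

lemma Lim.unique (hx : w.Lim a x) (hy : w.Lim a y) : x = y := by
  refine sub_eq_zero.1 (eq_zero_of_forall_valGe (w := w) fun N => ?_)
  obtain ⟨M, hM⟩ := hx N
  obtain ⟨M', hM'⟩ := hy N
  have h := (hM' (max M M') (le_max_right _ _)).sub (hM (max M M') (le_max_left _ _))
  rwa [sub_sub_sub_cancel_left] at h

lemma Lim.add (ha : w.Lim a x) (hb : w.Lim b y) : w.Lim (a + b) (x + y) := by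
  intro N
  obtain ⟨M, hM⟩ := ha N
  obtain ⟨M', hM'⟩ := hb N
  refine ⟨max M M', fun n hn => ?_⟩
  have h := (hM n (le_of_max_le_left hn)).add (hM' n (le_of_max_le_right hn))
  rwa [Pi.add_apply, add_sub_add_comm]

lemma Cau.sub (ha : w.Cau a) (hb : w.Cau b) : w.Cau (a - b) := by
  intro N
  obtain ⟨M, hM⟩ := ha N
  obtain ⟨M', hM'⟩ := hb N
  refine ⟨max M M', fun m hm n hn => ?_⟩
  have h := (hM m (le_of_max_le_left hm) n (le_of_max_le_left hn)).sub
    (hM' m (le_of_max_le_right hm) n (le_of_max_le_right hn))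
  rwa [sub_sub_sub_comm] at h

/-- Otherwise a sequence in `S` would converge to `y`. -/
lemma IsComplete.exists_v_sub_lt {S : Set F} (hS : w.IsComplete S) (hy : y ∉ S) :
    ∃ n₀ : ℤ, ∀ s ∈ S, w.v (y - s) < n₀ := by
  by_contra! h
  choose s hsS hs using fun n : ℕ => h n
  have hlim : w.Lim s y := fun N => ⟨N.toNat, fun n hn => by
    rw [← valGe_neg, neg_sub]
    exact Or.inr ((Int.self_le_toNat N).trans ((Nat.cast_le.2 hn).trans (hs n)))⟩
  obtain ⟨x, hxS, hx⟩ := hS s hsS hlim.cau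
  exact hy (hlim.unique hx ▸ hxS)

end Completeness
section Tower

variable {K L : Type} [Field K] [Field L] [Algebra K L]
  {wK : LocalFieldStruct K} {wL : LocalFieldStruct L} {e : ℕ}

namespace IsRamificationIndex

lemma v_smul (he : wK.IsRamificationIndex wL e) {c : K} {x : L} (hc : c ≠ 0) (hx : x ≠ 0) :
    wL.v (c • x) = e * wK.v c + wL.v x := by
  rw [Algebra.smul_def, wL.v_mul _ _ ((map_ne_zero _).2 hc) hx, he.2 c hc]

lemma valGe_smul (he : wK.IsRamificationIndex wL e) {c : K} {x : L} {N N' : ℤ}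
    (hc : wK.ValGe c N) (hx : wL.ValGe x N') : wL.ValGe (c • x) (e * N + N') := by
  by_cases hc0 : c = 0
  · exact Or.inl (hc0 ▸ zero_smul K x)
  by_cases hx0 : x = 0
  · exact Or.inl (by rw [hx0, smul_zero])
  rw [valGe_iff_of_ne_zero hc0] at hc
  rw [valGe_iff_of_ne_zero hx0] at hx
  rw [valGe_iff_of_ne_zero (smul_ne_zero hc0 hx0), he.v_smul hc0 hx0]
  have := mul_le_mul_of_nonneg_left hc (Int.natCast_nonneg e)
  omega

lemma lim_smul_const (he : wK.IsRamificationIndex wL e) {c : ℕ → K} {c₀ : K}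
    (hc : wK.Lim c c₀) (y : L) : wL.Lim (fun n => c n • y) (c₀ • y) := by
  intro N
  obtain ⟨M, hM⟩ := hc (max 0 (N - wL.v y))
  refine ⟨M, fun n hn => ?_⟩
  rw [← sub_smul]
  refine (he.valGe_smul (hM n hn) (valGe_self y)).mono ?_
  have : (1 : ℤ) ≤ e := by exact_mod_cast he.1
  nlinarith [le_max_left 0 (N - wL.v y), le_max_right 0 (N - wL.v y)]

lemma exists_valGe_coeff (he : wK.IsRamificationIndex wL e) {S : Submodule K L}
    (hS : wL.IsComplete S) {y : L} (hy : y ∉ S) :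
    ∃ n₀ : ℤ, ∀ s ∈ S, ∀ (c : K) (N : ℤ), wL.ValGe (s + c • y) (e * N + n₀) → wK.ValGe c N := by
  obtain ⟨n₀, hn₀⟩ := hS.exists_v_sub_lt hy
  refine ⟨n₀, fun s hs c N hsum => ?_⟩
  by_cases hc : c = 0
  · exact Or.inl hc
  have hsy : s + c • y = c • (y - -(c⁻¹ • s)) := by
    rw [sub_neg_eq_add, smul_add, smul_smul, mul_inv_cancel₀ hc, one_smul, add_comm]
  have hs' : -(c⁻¹ • s) ∈ S := S.neg_mem (S.smul_mem c⁻¹ hs)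
  have hne : y - -(c⁻¹ • s) ≠ 0 := fun h0 => hy (sub_eq_zero.1 h0 ▸ hs')
  rw [hsy, valGe_iff_of_ne_zero (smul_ne_zero hc hne), he.v_smul hc hne] at hsum
  have hlt : (e : ℤ) * N < e * wK.v c := by linarith [hn₀ _ hs']
  exact Or.inr (le_of_mul_le_mul_left hlt.le (by exact_mod_cast he.1))

lemma isComplete_sup_span_singleton (he : wK.IsRamificationIndex wL e) {S : Submodule K L}
    (hS : wL.IsComplete S) {y : L} (hy : y ∉ S) : wL.IsComplete ↑(S ⊔ K ∙ y) := by
  intro a haS ha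
  have hdecomp : ∀ n, ∃ s ∈ S, ∃ c : K, s + c • y = a n := fun n => by
    obtain ⟨s, hs, z, hz, hsz⟩ := Submodule.mem_sup.1 (haS n)
    obtain ⟨c, rfl⟩ := Submodule.mem_span_singleton.1 hz
    exact ⟨s, hs, c, hsz⟩
  choose s hs c hsc using hdecomp
  obtain ⟨n₀, hn₀⟩ := he.exists_valGe_coeff hS hy
  have hc : wK.Cau c := fun N => by
    obtain ⟨M, hM⟩ := ha (e * N + n₀)
    refine ⟨M, fun m hm n hn => hn₀ _ (S.sub_mem (hs m) (hs n)) _ N ?_⟩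
    convert hM m hm n hn using 1
    rw [← hsc, ← hsc, sub_smul]
    abel
  obtain ⟨c₀, hc₀⟩ := hc.exists_lim
  have hs_eq : s = a - fun n => c n • y := funext fun n => eq_sub_of_add_eq (hsc n)
  obtain ⟨s₀, hs₀, hs_lim⟩ := hS s hs (hs_eq ▸ ha.sub (he.lim_smul_const hc₀ y).cau)
  refine ⟨s₀ + c₀ • y, Submodule.add_mem_sup hs₀ (Submodule.smul_mem _ _
    (Submodule.mem_span_singleton_self y)), ?_⟩
  convert hs_lim.add (he.lim_smul_const hc₀ y) using 1
  exact funext fun n => (hsc n).symm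

lemma isComplete_span_finset (he : wK.IsRamificationIndex wL e) (s : Finset L) :
    wL.IsComplete (Submodule.span K (s : Set L)) := by
  classical
  induction s using Finset.induction_on with
  | empty =>
    intro a ha _
    refine ⟨0, Submodule.zero_mem _, fun N => ⟨0, fun n _ => Or.inl ?_⟩⟩
    simpa using ha n
  | insert y s _ ih =>
    rw [Finset.coe_insert]
    by_cases hy : y ∈ Submodule.span K (s : Set L)
    · rwa [Submodule.span_insert_eq_span hy]
    · rw [Submodule.span_insert, sup_comm]
      exact he.isComplete_sup_span_singleton ih hy

lemma exists_valGe_repr (he : wK.IsRamificationIndex wL e) {ι : Type*} [Fintype ι]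
    (b : Module.Basis ι K L) :
    ∃ C : ℤ, ∀ (x : L) (N : ℤ), wL.ValGe x (e * N + C) → ∀ j, wK.ValGe (b.repr x j) N := by
  classical
  have hcoord : ∀ j, ∃ n₀ : ℤ, ∀ (x : L) (N : ℤ),
      wL.ValGe x (e * N + n₀) → wK.ValGe (b.repr x j) N := by
    intro j
    set S := Submodule.span K (((Finset.univ.erase j).image b : Finset L) : Set L)
    have hbj : b j ∉ S := by
      simp only [S, Finset.coe_image, Finset.coe_erase]
      exact b.linearIndependent.notMem_span_image (by simp)
    obtain ⟨n₀, hn₀⟩ := he.exists_valGe_coeff (he.isComplete_span_finset _) hbj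
    refine ⟨n₀, fun x N hx => hn₀ (x - b.repr x j • b j) ?_ _ N (by rwa [sub_add_cancel])⟩
    have hrest : x - b.repr x j • b j = ∑ i ∈ Finset.univ.erase j, b.repr x i • b i := by
      rw [sub_eq_iff_eq_add', Finset.add_sum_erase _ (fun i => b.repr x i • b i)
        (Finset.mem_univ j), b.sum_repr]
    rw [hrest]
    exact Submodule.sum_mem _ fun i hi =>
      Submodule.smul_mem _ _ (Submodule.subset_span (Finset.mem_image_of_mem b hi))
  choose n₀ hn₀ using hcoord
  obtain ⟨C, hC⟩ := Finite.exists_le n₀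
  exact ⟨C, fun x N hx j => hn₀ j x N (hx.mono (by linarith [hC j]))⟩

end IsRamificationIndex

end Tower

section Uniqueness

variable {K L M : Type} [Field K] [Field L] [Field M]
  [Algebra K L] [Algebra L M] [Algebra K M] [IsScalarTower K L M] [FiniteDimensional K L]
  {wK : LocalFieldStruct K} {wL : LocalFieldStruct L} {wM : LocalFieldStruct M} {eL eM : ℕ}

lemma exists_valGe_algebraMap (heL : wK.IsRamificationIndex wL eL)
    (heM : wK.IsRamificationIndex wM eM) :
    ∃ C B : ℤ, ∀ (x : L) (N : ℤ),
      wL.ValGe x (eL * N + C) → wM.ValGe (algebraMap L M x) (eM * N + B) := by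
  let b := Module.finBasis K L
  obtain ⟨C, hC⟩ := heL.exists_valGe_repr b
  obtain ⟨B, hB⟩ := Finite.exists_ge fun i => wM.v (algebraMap L M (b i))
  refine ⟨C, B, fun x N hx => ?_⟩
  rw [← b.sum_repr x, map_sum]
  refine valGe_sum _ fun i _ => ?_
  rw [← IsScalarTower.toAlgHom_apply K L M, map_smul, IsScalarTower.toAlgHom_apply]
  exact heM.valGe_smul (hC x N hx i) (Or.inr (hB i))

/-- Applying `exists_valGe_algebraMap` to `x ^ (eL * n)` for all `n` removes its constants. -/
lemma mul_v_le_mul_v_algebraMap (heL : wK.IsRamificationIndex wL eL)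
    (heM : wK.IsRamificationIndex wM eM) {x : L} (hx : x ≠ 0) :
    eM * wL.v x ≤ eL * wM.v (algebraMap L M x) := by
  obtain ⟨C, B, h⟩ := exists_valGe_algebraMap (M := M) heL heM
  have hx' : algebraMap L M x ≠ 0 := (map_ne_zero _).2 hx
  have heL1 : (1 : ℤ) ≤ eL := by exact_mod_cast heL.1
  suffices (eM * wL.v x - eL * wM.v (algebraMap L M x)) ≤ 0 by linarith
  refine Int.nonpos_of_forall_nat_mul_le (C := eM * |C| - B) fun n => ?_
  have hpow := h (x ^ (eL * n)) (n * wL.v x - |C|) (by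
    rw [valGe_iff_of_ne_zero (pow_ne_zero _ hx), wL.v_pow hx]
    push_cast
    nlinarith [le_abs_self C, abs_nonneg C])
  rw [map_pow, valGe_iff_of_ne_zero (pow_ne_zero _ hx'), wM.v_pow hx'] at hpow
  push_cast at hpow
  linarith

lemma mul_v_algebraMap_eq_mul_v (heL : wK.IsRamificationIndex wL eL)
    (heM : wK.IsRamificationIndex wM eM) {x : L} (hx : x ≠ 0) :
    eL * wM.v (algebraMap L M x) = eM * wL.v x := by
  have hinv := mul_v_le_mul_v_algebraMap (M := M) heL heM (inv_ne_zero hx)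
  rw [map_inv₀, wL.v_inv hx, wM.v_inv ((map_ne_zero _).2 hx)] at hinv
  linarith [mul_v_le_mul_v_algebraMap (M := M) heL heM hx]

theorem IsRamificationIndex.exists_eq_mul (heL : wK.IsRamificationIndex wL eL)
    (heM : wK.IsRamificationIndex wM eM) :
    ∃ e : ℕ, wL.IsRamificationIndex wM e ∧ eM = e * eL := by
  obtain ⟨π, hπ, hvπ⟩ := wL.v_surj 1
  have hπM := mul_v_algebraMap_eq_mul_v (M := M) heL heM hπ
  rw [hvπ, mul_one] at hπM
  have heL0 : (0 : ℤ) < eL := by exact_mod_cast heL.1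
  have heM0 : (0 : ℤ) < eM := by exact_mod_cast heM.1
  have he : 0 < wM.v (algebraMap L M π) := pos_of_mul_pos_right (hπM ▸ heM0) heL0.le
  refine ⟨(wM.v (algebraMap L M π)).toNat, ⟨by omega, fun x hx => ?_⟩, ?_⟩
  · refine mul_left_cancel₀ heL0.ne' ?_
    rw [mul_v_algebraMap_eq_mul_v heL heM hx, Int.toNat_of_nonneg he.le, ← hπM, mul_assoc]
  · zify
    rw [Int.toNat_of_nonneg he.le, ← hπM, mul_comm]

end Uniqueness

end LocalFieldStruct

section NormalElement

variable {K L M : Type} [Field K] [Field L] [Field M]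
  [Algebra K L] [Algebra L M] [Algebra K M] [IsScalarTower K L M]

lemma isNormalElement_iff_span_eq_top [FiniteDimensional K L] [IsGalois K L] (x : L) :
    IsNormalElement K x ↔ Submodule.span K (Set.range fun σ : L ≃ₐ[K] L => σ x) = ⊤ :=
  ⟨And.right, fun h => ⟨linearIndependent_of_top_le_span_of_card_eq_finrank h.ge
    (Fintype.card_eq_nat_card.trans (IsGalois.card_aut_eq_finrank K L)), h⟩⟩

lemma AlgEquiv.restrictNormal_trace [Normal K L] (σ : M ≃ₐ[K] M) (y : M) :
    σ.restrictNormal L (Algebra.trace L M y) = Algebra.trace L M (σ y) := by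
  rw [Algebra.trace_eq_of_equiv_equiv (σ.restrictNormal L).toRingEquiv σ.toRingEquiv
    (RingHom.ext fun x => σ.restrictNormal_commutes L x) y]
  exact (σ.restrictNormal L).toRingEquiv.apply_symm_apply _

theorem IsNormalElement.trace [FiniteDimensional K M] [IsGalois K M] [IsGalois K L] {y : M}
    (hy : IsNormalElement K y) : IsNormalElement K (Algebra.trace L M y) := by
  have : FiniteDimensional K L := Module.Finite.left K L M
  have : FiniteDimensional L M := Module.Finite.right K L M
  have : IsGalois L M := IsGalois.tower_top_of_isGalois K L M
  let T : M →ₗ[K] L := (Algebra.trace L M).restrictScalars K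
  have hT : LinearMap.range T = ⊤ := LinearMap.range_eq_top.2 (Algebra.trace_surjective L M)
  rw [isNormalElement_iff_span_eq_top, eq_top_iff, ← hT, LinearMap.range_eq_map, ← hy.2,
    Submodule.map_span]
  refine Submodule.span_mono ?_
  rintro - ⟨-, ⟨σ, rfl⟩, rfl⟩
  exact ⟨σ.restrictNormal L, AlgEquiv.restrictNormal_trace σ y⟩

end NormalElement

namespace LocalFieldStruct

section Different

variable {K L : Type} [Field K] [Field L] [Algebra K L]
  {wK : LocalFieldStruct K} {wL : LocalFieldStruct L} {d : ℤ}

lemma IsDifferentVal.integral_trace (hd : wK.IsDifferentVal wL d) {x : L}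
    (hx : x ≠ 0 → -d ≤ wL.v x) : wK.Integral (Algebra.trace K L x) :=
  (hd (-d)).2 le_rfl x hx

lemma IsDifferentVal.v_le_of_not_integral_trace (hd : wK.IsDifferentVal wL d) {x : L}
    (htr : ¬ wK.Integral (Algebra.trace K L x)) : wL.v x ≤ -d - 1 := by
  by_contra! h
  exact htr (hd.integral_trace fun _ => by omega)

lemma IsDifferentVal.exists_not_integral_trace (hd : wK.IsDifferentVal wL d) :
    ∃ x : L, x ≠ 0 ∧ wL.v x = -d - 1 ∧ ¬ wK.Integral (Algebra.trace K L x) := by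
  have := mt (hd (-d - 1)).1 (by omega)
  push Not at this
  obtain ⟨x, hxv, htr⟩ := this
  have hx : x ≠ 0 := by
    rintro rfl
    exact htr (Or.inl (map_zero _))
  exact ⟨x, hx, le_antisymm (hd.v_le_of_not_integral_trace htr) (hxv hx), htr⟩

end Different

section DifferentTower

variable {K L M : Type} [Field K] [Field L] [Field M]
  [Algebra K L] [Algebra L M] [Algebra K M] [IsScalarTower K L M]
  {wK : LocalFieldStruct K} {wL : LocalFieldStruct L} {wM : LocalFieldStruct M}

lemma trace_div_trace_smul {w : M} (hw : Algebra.trace L M w ≠ 0) (s : L) :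
    Algebra.trace L M ((s / Algebra.trace L M w) • w) = s := by
  rw [map_smul, smul_eq_mul, div_mul_cancel₀ _ hw]

/-- For the lower bound, `s ↦ (s / t₀) • w₀` carries elements of `L` of valuation `> v_L(t₀)` to
elements of `M` of valuation `≥ -d_{M/K}` with the same trace to `K`. -/
theorem v_trace_eq_of_not_integral_trace [FiniteDimensional K L] [FiniteDimensional L M]
    {e : ℕ} {dM dL : ℤ} (heML : wL.IsRamificationIndex wM e) (hdM : wK.IsDifferentVal wM dM)
    (hdL : wK.IsDifferentVal wL dL) {w₀ : M} (hw₀ : wM.v w₀ = -dM - 1)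
    (htr : ¬ wK.Integral (Algebra.trace K M w₀)) :
    Algebra.trace L M w₀ ≠ 0 ∧ wL.v (Algebra.trace L M w₀) = -dL - 1 := by
  have htt : Algebra.trace K L (Algebra.trace L M w₀) = Algebra.trace K M w₀ :=
    Algebra.trace_trace w₀
  have ht : Algebra.trace L M w₀ ≠ 0 := fun h0 =>
    htr (htt ▸ Or.inl (by rw [h0, map_zero]))
  have hw₀0 : w₀ ≠ 0 := by
    rintro rfl
    exact ht (map_zero _)
  refine ⟨ht, le_antisymm (hdL.v_le_of_not_integral_trace (htt ▸ htr)) ?_⟩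
  suffices -dL ≤ wL.v (Algebra.trace L M w₀) + 1 by omega
  refine (hdL _).1 fun s hs => ?_
  by_cases hs0 : s = 0
  · exact Or.inl (by rw [hs0, map_zero])
  have hst : s / Algebra.trace L M w₀ ≠ 0 := div_ne_zero hs0 ht
  rw [← trace_div_trace_smul ht s, Algebra.trace_trace]
  refine hdM.integral_trace fun _ => ?_
  rw [heML.v_smul hst hw₀0, wL.v_div hs0 ht, hw₀]
  have he : (1 : ℤ) ≤ e := by exact_mod_cast heML.1
  nlinarith [hs hs0]

end DifferentTower

end LocalFieldStruct

open LocalFieldStruct in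
/-- **Corollary.** If `K ⊆ L ⊆ M` are finite extensions of local fields with
`M` and `L` both Galois over `K`, then `VC(M/K)` implies `VC(L/K)`. -/
theorem statement6 {K L M : Type} [Field K] [Field L] [Field M]
    [Algebra K L] [Algebra L M] [Algebra K M] [IsScalarTower K L M]
    [FiniteDimensional K M] [IsGalois K M] [IsGalois K L]
    (wK : LocalFieldStruct K) (wL : LocalFieldStruct L) (wM : LocalFieldStruct M)
    (eMK : ℕ) (heMK : IsRamificationIndex wK wM eMK)
    (dMK : ℤ) (hdMK : IsDifferentVal wK wM dMK)
    (eLK : ℕ) (heLK : IsRamificationIndex wK wL eLK)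
    (dLK : ℤ) (hdLK : IsDifferentVal wK wL dLK)
    (h : VC K wM eMK dMK) :
    VC K wL eLK dLK := by
  have : FiniteDimensional K L := Module.Finite.left K L M
  have : FiniteDimensional L M := Module.Finite.right K L M
  obtain ⟨e, heML, rfl⟩ := heLK.exists_eq_mul heMK
  obtain ⟨w₀, hw₀, hw₀v, hw₀tr⟩ := hdMK.exists_not_integral_trace
  obtain ⟨ht₀, ht₀v⟩ := v_trace_eq_of_not_integral_trace heML hdMK hdLK hw₀v hw₀tr
  intro x hx hmod
  have hc : x / Algebra.trace L M w₀ ≠ 0 := div_ne_zero hx ht₀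
  rw [← trace_div_trace_smul ht₀ x]
  refine (h _ (smul_ne_zero hc hw₀) ?_).trace
  rw [heML.v_smul hc hw₀, wL.v_div hx ht₀, ht₀v, hw₀v]
  obtain ⟨k, hk⟩ := Int.modEq_iff_dvd.1 hmod
  exact Int.modEq_iff_dvd.2 ⟨k, by push_cast; linear_combination e * hk⟩
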